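/- Let r < 0, set η := √(−r) and γ := e^{2η}, and let φ be the solution of φ'' + 2φ' + φ − γ·φ² = 0 on (0,∞) with φ(0) = 1/(2γ), φ'(0) = 0 (so that φ' < 0 and φ'/φ ≥ −1 on (0,∞)). Define u̲₂(t,x) := e^{η·z/√t}·φ(z) where z := x − 2t + r·ln t. Then for all t > 0 and all x with 0 < z ≤ 2√t, one has ∂ₜu̲₂(t,x) − ∂ₓₓu̲₂(t,x) − u̲₂(t,x)·(1 − u̲₂(t,x)) ≤ 0; that is, u̲₂ is a sub-solution of the Fisher-KPP equation in the region {t > 0, 0 < x − 2t + r·ln t ≤ 2√t}. -/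

import Mathlib

open Real Filter

noncomputable section

def SolvesPhiODE (φ : ℝ → ℝ) (γ : ℝ) : Prop :=
  (∀ z : ℝ, DifferentiableAt ℝ φ z ∧ DifferentiableAt ℝ (deriv φ) z) ∧
  (∀ z : ℝ, 0 < z →
    deriv (deriv φ) z + 2 * deriv φ z + φ z - γ * φ z ^ 2 = 0) ∧
  φ 0 = 1 / (2 * γ) ∧ deriv φ 0 = 0

/-! With `E = e^{ηz/√t}`, `r = -η²` and the ODE for `φ`, the Fisher-KPP residual of
`u̲₂ = E φ(z)` is `E` times
`-(η/√t)(η² + z/2)/t · φ(z) - (η²/t + 2η/√t)(φ'(z) + φ(z)) + (E - γ) φ(z)²`.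
All three terms are nonpositive: the first since `η, z ≥ 0`, the second since `φ'/φ ≥ -1`,
the third since `z ≤ 2√t` gives `E ≤ e^{2η} = γ`. -/

theorem hasDerivAt_travelingCoordinate (x r : ℝ) {t : ℝ} (ht : 0 < t) :
    HasDerivAt (fun s => x - 2 * s + r * log s) (-2 + r / t) t := by
  have h := (((hasDerivAt_id t).const_mul 2).const_sub x).add ((hasDerivAt_log ht.ne').const_mul r)
  refine h.congr_deriv ?_
  ring

theorem hasDerivAt_exp_div_sqrt_mul_comp {φ ζ : ℝ → ℝ} {η ζ' t : ℝ} (ht : 0 < t)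
    (hζ : HasDerivAt ζ ζ' t) (hφ : DifferentiableAt ℝ φ (ζ t)) :
    HasDerivAt (fun s => exp (η * ζ s / √s) * φ (ζ s))
      (exp (η * ζ t / √t) * (η / √t * (ζ' - ζ t / (2 * t)) * φ (ζ t) + ζ' * deriv φ (ζ t)))
      t := by
  have hq : 0 < √t := sqrt_pos.mpr ht
  have hexp := ((hζ.const_mul η).div (hasDerivAt_sqrt ht.ne') hq.ne').exp
  refine (hexp.mul (hφ.hasDerivAt.comp t hζ)).congr_deriv ?_
  have hcube : √t ^ 3 = t * √t := by rw [pow_succ, sq_sqrt ht.le]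
  simp only [Pi.div_apply, Function.comp_apply]
  field_simp
  rw [hcube, sq_sqrt ht.le]
  ring

theorem deriv_exp_mul_comp_shift {φ : ℝ → ℝ} (hφ : Differentiable ℝ φ) (η q a b : ℝ) :
    deriv (fun y => exp (η * (y - a + b) / q) * φ (y - a + b))
      = fun y => exp (η * (y - a + b) / q) * (η / q * φ (y - a + b) + deriv φ (y - a + b)) := by
  funext y
  have hw : HasDerivAt (fun y : ℝ => y - a + b) 1 y := ((hasDerivAt_id y).sub_const a).add_const b
  have hexp := ((hw.const_mul η).div_const q).exp
  have h : HasDerivAt (fun y => exp (η * (y - a + b) / q) * φ (y - a + b)) _ y :=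
    hexp.mul ((hφ _).hasDerivAt.comp y hw)
  rw [h.deriv]
  ring

theorem deriv_deriv_exp_mul_comp_shift {φ : ℝ → ℝ} (hφ : Differentiable ℝ φ) (η q a b : ℝ)
    {x : ℝ} (hφ' : DifferentiableAt ℝ (deriv φ) (x - a + b)) :
    deriv (deriv (fun y => exp (η * (y - a + b) / q) * φ (y - a + b))) x
      = exp (η * (x - a + b) / q) * ((η / q) ^ 2 * φ (x - a + b)
          + 2 * (η / q) * deriv φ (x - a + b) + deriv (deriv φ) (x - a + b)) := by
  have hw : HasDerivAt (fun y : ℝ => y - a + b) 1 x := ((hasDerivAt_id x).sub_const a).add_const b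
  have hexp := ((hw.const_mul η).div_const q).exp
  have hφ'w := hφ'.hasDerivAt.comp x hw
  have h : HasDerivAt
      (fun y => exp (η * (y - a + b) / q) * (η / q * φ (y - a + b) + deriv φ (y - a + b))) _ x :=
    hexp.mul ((((hφ _).hasDerivAt.comp x hw).const_mul (η / q)).add hφ'w)
  rw [deriv_exp_mul_comp_shift hφ, h.deriv]
  ring

theorem fisherKPP_residual_nonpos {r t η q z E γ P P₁ P₂ : ℝ} (hr : r = -η ^ 2) (hη : 0 ≤ η)
    (hq : 0 < q) (ht : q ^ 2 = t) (hz : 0 < z) (hE : 0 ≤ E) (hEγ : E ≤ γ) (hP : 0 < P)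
    (hP₁ : -P ≤ P₁) (hode : P₂ + 2 * P₁ + P - γ * P ^ 2 = 0) :
    E * (η / q * (-2 + r / t - z / (2 * t)) * P + (-2 + r / t) * P₁)
      - E * ((η / q) ^ 2 * P + 2 * (η / q) * P₁ + P₂) - E * P * (1 - E * P) ≤ 0 := by
  subst hr ht
  have hsplit : E * (η / q * (-2 + -η ^ 2 / q ^ 2 - z / (2 * q ^ 2)) * P + (-2 + -η ^ 2 / q ^ 2) * P₁)
      - E * ((η / q) ^ 2 * P + 2 * (η / q) * P₁ + P₂) - E * P * (1 - E * P)
      = E * (-(η / q) * ((η ^ 2 + z / 2) / q ^ 2) * P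
          - (η ^ 2 / q ^ 2 + 2 * (η / q)) * (P₁ + P) + (E - γ) * P ^ 2) := by
    linear_combination (-E) * hode
  have hdrift : 0 ≤ η / q * ((η ^ 2 + z / 2) / q ^ 2) * P := by positivity
  have hslope : 0 ≤ (η ^ 2 / q ^ 2 + 2 * (η / q)) * (P₁ + P) :=
    mul_nonneg (by positivity) (by linarith)
  have hreaction : (E - γ) * P ^ 2 ≤ 0 := mul_nonpos_of_nonpos_of_nonneg (by linarith) (sq_nonneg P)
  rw [hsplit]
  exact mul_nonpos_of_nonneg_of_nonpos hE (by linarith)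

/-- Step 4 of the proof of Proposition 4.1 (advance case `r < 0`): with `η = √(-r)`,
`γ = e^{2η}`, the function `u̲₂(t,x) = e^{η z/√t} φ(z)`, `z = x - 2t + r ln t`, is a
sub-solution of the Fisher-KPP equation in the region `{t > 0, 0 < z ≤ 2√t}`. -/
theorem second_subsolution_advance
    (r : ℝ) (hr : r < 0) (η γ : ℝ)
    (hη : η = Real.sqrt (-r)) (hγ : γ = Real.exp (2 * η))
    (φ : ℝ → ℝ) (hφ : SolvesPhiODE φ γ)
    (hφ' : ∀ z : ℝ, 0 < z → 0 < φ z ∧ deriv φ z < 0 ∧ -1 ≤ deriv φ z / φ z) :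
    ∀ t : ℝ, 0 < t → ∀ x : ℝ,
      0 < x - 2 * t + r * Real.log t →
      x - 2 * t + r * Real.log t ≤ 2 * Real.sqrt t →
      deriv (fun s =>
          Real.exp (η * (x - 2 * s + r * Real.log s) / Real.sqrt s)
            * φ (x - 2 * s + r * Real.log s)) t
        - deriv (deriv (fun y =>
            Real.exp (η * (y - 2 * t + r * Real.log t) / Real.sqrt t)
              * φ (y - 2 * t + r * Real.log t))) x
        - Real.exp (η * (x - 2 * t + r * Real.log t) / Real.sqrt t)
            * φ (x - 2 * t + r * Real.log t)
          * (1 - Real.exp (η * (x - 2 * t + r * Real.log t) / Real.sqrt t)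
                * φ (x - 2 * t + r * Real.log t)) ≤ 0 := by
  obtain ⟨hdiff, hode, -, -⟩ := hφ
  intro t ht x hz hz_le
  set z := x - 2 * t + r * log t
  have hφdiff : Differentiable ℝ φ := fun y => (hdiff y).1
  rw [(hasDerivAt_exp_div_sqrt_mul_comp ht (hasDerivAt_travelingCoordinate x r ht)
      (hdiff z).1).deriv, deriv_deriv_exp_mul_comp_shift hφdiff η _ _ _ (hdiff z).2]
  obtain ⟨hP, -, hratio⟩ := hφ' z hz
  have hη_nonneg : 0 ≤ η := hη ▸ sqrt_nonneg _
  have hEγ : exp (η * z / √t) ≤ γ := by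
    rw [hγ, exp_le_exp, div_le_iff₀ (sqrt_pos.mpr ht)]
    nlinarith
  refine fisherKPP_residual_nonpos (by rw [hη, sq_sqrt (by linarith)]; ring) hη_nonneg
    (sqrt_pos.mpr ht) (sq_sqrt ht.le) hz (exp_pos _).le hEγ hP ?_ (hode z hz)
  linarith [(le_div_iff₀ hP).mp hratio]
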